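/- Let W be a row of positive integer weights and suppose I ⊂ P is zero-dimensional with an O-border basis G = {g_1,…,g_ν} such that b_j ∈ Supp(DF_W(g_j)) for all j. Then the degree form ideal DF_W(I) has an O-border basis, namely DF_W(G) = {DF_W(g_1),…,DF_W(g_ν)}. -/

import Mathlib

/-!
Write `g_b = b - h_b`. As `b` has maximal degree in `g_b`, every monomial of `h_b` has degree at
most `deg b`, and `DF(g_b) = b - (h_b)_{deg b}`. Border division with the relations `b = g_b + h_b`
writes every monomial `m` as an element of `I` plus a combination of elements of `O` of degree at
most `deg m`; taking degree-`deg m` components gives `P = DF(I) + ⟨O⟩`.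

For `DF(I) ∩ ⟨O⟩ = 0`: the degree-`d` component of an element of `DF(I)` is `f_d` for some `f ∈ I`
of degree `≤ d`. If `f_d ∈ ⟨O⟩`, border division of the lower-degree part `f - f_d` gives
`f_d + v ∈ I ∩ ⟨O⟩ = 0` with `deg v < d`, so `f_d = 0`.
-/

open MvPolynomial Finsupp

open scoped Classical in
/-- The border of a finite set of monomials (represented as exponent vectors). -/
noncomputable def borderSet (n : ℕ) (O : Finset (Fin n →₀ ℕ)) : Finset (Fin n →₀ ℕ) :=
  (O.biUnion (fun t => Finset.image (fun k => t + Finsupp.single k 1) Finset.univ)) \ O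

/-- The `W`-degree of a monomial with respect to the weights `w`. -/
def degW (n : ℕ) (w : Fin n → ℕ) (m : Fin n →₀ ℕ) : ℕ := ∑ i, w i * m i

/-- `g` is an `O`-border basis of `I`: each `g b` (for `b` in the border) lies in `I` and has
the prebasis shape `b - Σ c_i t_i`, and `P = I ⊕ ⟨O⟩_K` as `K`-vector spaces. -/
def IsBorderBasis (K : Type*) [Field K] (n : ℕ) (O : Finset (Fin n →₀ ℕ))
    (I : Ideal (MvPolynomial (Fin n) K)) (g : (Fin n →₀ ℕ) → MvPolynomial (Fin n) K) : Prop :=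
  (∀ b ∈ borderSet n O, g b ∈ I ∧ ∃ c : (Fin n →₀ ℕ) → K,
      g b = monomial b 1 - ∑ t ∈ O, MvPolynomial.C (c t) * monomial t 1) ∧
  IsCompl (Submodule.restrictScalars K I)
    (Submodule.span K {p : MvPolynomial (Fin n) K | ∃ t ∈ O, p = monomial t 1})

/-- The degree form `DF_W(f)`: the homogeneous component of `f` of maximal `W`-degree. -/
noncomputable def DF (K : Type*) [Field K] (n : ℕ) (w : Fin n → ℕ)
    (f : MvPolynomial (Fin n) K) : MvPolynomial (Fin n) K :=
  ∑ m ∈ f.support.filter (fun m => degW n w m = f.support.sup (degW n w)),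
    monomial m (coeff m f)

/-- The degree form ideal `DF_W(I)`, generated by the degree forms of nonzero elements of `I`. -/
noncomputable def DFideal (K : Type*) [Field K] (n : ℕ) (w : Fin n → ℕ)
    (I : Ideal (MvPolynomial (Fin n) K)) : Ideal (MvPolynomial (Fin n) K) :=
  Ideal.span {p | ∃ f ∈ I, f ≠ 0 ∧ p = DF K n w f}

namespace MvPolynomial

section WeightedComponents

variable {σ R : Type*} [CommSemiring R] {w : σ → ℕ}

lemma restrictSupport_le_iff {s : Set (σ →₀ ℕ)} {V : Submodule R (MvPolynomial σ R)} :
    restrictSupport R s ≤ V ↔ ∀ m ∈ s, monomial m (1 : R) ∈ V := by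
  rw [restrictSupport_eq_span, Submodule.span_le, Set.image_subset_iff]
  rfl

lemma sum_C_mul_monomial_of_mem_restrictSupport {O : Finset (σ →₀ ℕ)} {p : MvPolynomial σ R}
    (hp : p ∈ restrictSupport R ↑O) : ∑ t ∈ O, C (coeff t p) * monomial t 1 = p := by
  conv_rhs => rw [p.as_sum]
  simp_rw [C_mul_monomial, mul_one]
  refine (Finset.sum_subset ((mem_restrictSupport_iff R).mp hp) fun t _ ht => ?_).symm
  rw [notMem_support_iff.mp ht, monomial_zero]

lemma weightedHomogeneousComponent_mem_restrictSupport {s : Set (σ →₀ ℕ)}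
    {p : MvPolynomial σ R} (hp : p ∈ restrictSupport R s) (d : ℕ) :
    weightedHomogeneousComponent w d p ∈ restrictSupport R s := by
  rw [mem_restrictSupport_iff, support_weightedHomogeneousComponent, Finset.coe_filter]
  exact fun m hm => hp hm.1

lemma weightedHomogeneousComponent_monomial_mul (a : σ →₀ ℕ) (d : ℕ) (p : MvPolynomial σ R) :
    weightedHomogeneousComponent w (weight w a + d) (monomial a 1 * p) =
      monomial a 1 * weightedHomogeneousComponent w d p := by
  ext s
  simp only [coeff_weightedHomogeneousComponent, coeff_monomial_mul', one_mul]
  by_cases has : a ≤ s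
  · have hw : weight w s = weight w a + weight w (s - a) := by
      rw [← map_add, add_tsub_cancel_of_le has]
    simp only [if_pos has, hw, Nat.add_left_cancel_iff]
  · simp only [if_neg has, ite_self]

lemma weightedHomogeneousComponent_monomial_mul_of_lt {a : σ →₀ ℕ} {d : ℕ}
    (hd : d < weight w a) (p : MvPolynomial σ R) :
    weightedHomogeneousComponent w d (monomial a 1 * p) = 0 := by
  refine weightedHomogeneousComponent_eq_zero' _ _ fun s hs hsd => ?_
  classical
  obtain ⟨a', ha', s', -, rfl⟩ := Finset.mem_add.mp (support_mul _ _ hs)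
  obtain rfl := Finset.mem_singleton.mp (support_monomial_subset ha')
  rw [map_add] at hsd
  omega

end WeightedComponents

section DegreeForms

variable {σ R : Type*} [CommRing R] {w : σ → ℕ}

/-- The degree-`d` part of `DF_W(I)`, by `weightedHomogeneousComponent_mem_degreeFormSpace` and
`degreeFormSpace_le_DFideal`. -/
noncomputable def degreeFormSpace (w : σ → ℕ) (I : Ideal (MvPolynomial σ R)) (d : ℕ) :
    Submodule R (MvPolynomial σ R) :=
  (I.restrictScalars R ⊓ restrictSupport R {m | weight w m ≤ d}).map
    (weightedHomogeneousComponent w d)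

variable {I : Ideal (MvPolynomial σ R)}

lemma monomial_mul_mem_restrictSupport {a : σ →₀ ℕ} {d : ℕ} {f : MvPolynomial σ R}
    (hf : f ∈ restrictSupport R {m | weight w m ≤ d}) :
    monomial a 1 * f ∈ restrictSupport R {m | weight w m ≤ weight w a + d} := by
  classical
  refine (mem_restrictSupport_iff R).mpr fun s hs => ?_
  obtain ⟨a', ha', s', hs', rfl⟩ := Finset.mem_add.mp (support_mul _ _ hs)
  obtain rfl := Finset.mem_singleton.mp (support_monomial_subset ha')
  have : weight w s' ≤ d := hf hs'
  change weight w (_ + s') ≤ _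
  rw [map_add]
  omega

lemma monomial_mul_mem_degreeFormSpace {p : MvPolynomial σ R}
    (hp : ∀ c, weightedHomogeneousComponent w c p ∈ degreeFormSpace w I c) (a : σ →₀ ℕ)
    (d : ℕ) : weightedHomogeneousComponent w d (monomial a 1 * p) ∈ degreeFormSpace w I d := by
  rcases lt_or_ge d (weight w a) with hd | hd
  · rw [weightedHomogeneousComponent_monomial_mul_of_lt hd]
    exact zero_mem _
  obtain ⟨c, rfl⟩ := Nat.exists_eq_add_of_le hd
  obtain ⟨f, ⟨hfI, hfc⟩, hf⟩ := hp c
  refine ⟨monomial a 1 * f, ⟨I.mul_mem_left _ hfI, monomial_mul_mem_restrictSupport hfc⟩, ?_⟩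
  simp only [weightedHomogeneousComponent_monomial_mul, ← hf]

lemma mul_mem_degreeFormSpace {p : MvPolynomial σ R}
    (hp : ∀ c, weightedHomogeneousComponent w c p ∈ degreeFormSpace w I c)
    (a : MvPolynomial σ R) (d : ℕ) :
    weightedHomogeneousComponent w d (a * p) ∈ degreeFormSpace w I d := by
  induction a using induction_on' with
  | monomial u r =>
    rw [show monomial u r = r • monomial u 1 by rw [smul_monomial, smul_eq_mul, mul_one],
      smul_mul_assoc, map_smul]
    exact Submodule.smul_mem _ _ (monomial_mul_mem_degreeFormSpace hp u d)
  | add a b ha hb =>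
    rw [add_mul, map_add]
    exact add_mem ha hb

end DegreeForms

end MvPolynomial

section DegreeFormIdeal

variable {K : Type*} [Field K] {n : ℕ} {w : Fin n → ℕ} {I : Ideal (MvPolynomial (Fin n) K)}

lemma degW_eq_weight (w : Fin n → ℕ) : degW n w = weight w := by
  funext m
  simp [degW, weight_apply, Finsupp.sum_fintype, mul_comm]

lemma DF_eq_weightedHomogeneousComponent (f : MvPolynomial (Fin n) K) :
    DF K n w f = weightedHomogeneousComponent w (weightedTotalDegree w f) f := by
  rw [weightedHomogeneousComponent_apply, DF, degW_eq_weight]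
  rfl

lemma span_monomial_eq_restrictSupport (O : Finset (Fin n →₀ ℕ)) :
    Submodule.span K {p : MvPolynomial (Fin n) K | ∃ t ∈ O, p = monomial t 1} =
      restrictSupport K ↑O := by
  rw [restrictSupport_eq_span]
  congr
  ext
  simp [eq_comm]

lemma weightedHomogeneousComponent_mem_degreeFormSpace {q : MvPolynomial (Fin n) K}
    (hq : q ∈ DFideal K n w I) (d : ℕ) :
    weightedHomogeneousComponent w d q ∈ degreeFormSpace w I d := by
  induction hq using Submodule.span_induction generalizing d with
  | mem x hx =>
    obtain ⟨f, hfI, -, rfl⟩ := hx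
    have hhom := weightedHomogeneousComponent_isWeightedHomogeneous (w := w)
      (weightedTotalDegree w f) f
    rw [DF_eq_weightedHomogeneousComponent]
    by_cases hd : weightedTotalDegree w f = d
    · subst hd
      rw [weightedHomogeneousComponent_eq_self hhom]
      exact ⟨f, ⟨hfI, fun m hm => le_weightedTotalDegree w hm⟩, rfl⟩
    · rw [hhom.weightedHomogeneousComponent_ne d (Ne.symm hd)]
      exact zero_mem _
  | zero => simp
  | add x y _ _ hx hy =>
    rw [map_add]
    exact add_mem (hx d) (hy d)
  | smul a x _ hx => exact mul_mem_degreeFormSpace hx a d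

lemma degreeFormSpace_le_DFideal (d : ℕ) :
    degreeFormSpace w I d ≤ (DFideal K n w I).restrictScalars K := by
  rintro _ ⟨f, ⟨hfI, hfd⟩, rfl⟩
  have hle : weightedTotalDegree w f ≤ d := Finset.sup_le fun m hm => hfd hm
  rcases hle.lt_or_eq with hlt | rfl
  · rw [weightedHomogeneousComponent_eq_zero _ _ hlt]
    exact zero_mem _
  rcases eq_or_ne f 0 with rfl | hf0
  · simp
  rw [← DF_eq_weightedHomogeneousComponent]
  exact Ideal.subset_span ⟨f, hfI, hf0, rfl⟩

end DegreeFormIdeal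

section Complement

variable {K : Type*} [Field K] {n : ℕ} {w : Fin n → ℕ} {I : Ideal (MvPolynomial (Fin n) K)}
  {O : Set (Fin n →₀ ℕ)}

lemma eq_zero_of_mem_degreeFormSpace
    (hI : ∀ m, monomial m (1 : K) ∈
      I.restrictScalars K ⊔ restrictSupport K (O ∩ {t | weight w t ≤ weight w m}))
    (hdisj : Disjoint (I.restrictScalars K) (restrictSupport K O)) {d : ℕ}
    {p : MvPolynomial (Fin n) K} (hp : p ∈ degreeFormSpace w I d)
    (hpO : p ∈ restrictSupport K O) : p = 0 := by
  obtain ⟨f, ⟨hfI, hfd⟩, rfl⟩ := hp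
  have hlow : f - weightedHomogeneousComponent w d f ∈ restrictSupport K {m | weight w m < d} := by
    refine (mem_restrictSupport_iff K).mpr fun s hs => ?_
    have hs' := MvPolynomial.mem_support_iff.mp hs
    rw [coeff_sub, coeff_weightedHomogeneousComponent] at hs'
    split_ifs at hs' with hsd
    · exact absurd (sub_self _) hs'
    · exact lt_of_le_of_ne (hfd (MvPolynomial.mem_support_iff.mpr (by simpa using hs'))) hsd
  have hreduce : restrictSupport K {m | weight w m < d} ≤
      I.restrictScalars K ⊔ restrictSupport K (O ∩ {t | weight w t < d}) :=
    restrictSupport_le_iff.mpr fun m (hm : weight w m < d) => sup_le_sup_left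
      (restrictSupport_mono K (Set.inter_subset_inter_right O
        fun t (ht : weight w t ≤ weight w m) => ht.trans_lt hm)) _ (hI m)
  obtain ⟨u, hu, v, hv, huv⟩ := Submodule.mem_sup.mp (hreduce hlow)
  have hvO : v ∈ restrictSupport K O := restrictSupport_mono K Set.inter_subset_left hv
  have hsum : weightedHomogeneousComponent w d f + v = 0 := by
    refine Submodule.disjoint_def.mp hdisj _ ?_ (add_mem hpO hvO)
    rw [show weightedHomogeneousComponent w d f + v = f - u by
      rw [eq_sub_of_add_eq' huv]; ring]
    exact sub_mem hfI hu
  have hv0 : weightedHomogeneousComponent w d v = 0 :=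
    weightedHomogeneousComponent_eq_zero' _ _ fun t ht => (hv ht).2.ne
  simpa [weightedHomogeneousComponent_eq_self
    (weightedHomogeneousComponent_isWeightedHomogeneous d f), hv0] using
    congrArg (weightedHomogeneousComponent w d) hsum

lemma isCompl_DFideal
    (hI : ∀ m, monomial m (1 : K) ∈
      I.restrictScalars K ⊔ restrictSupport K (O ∩ {t | weight w t ≤ weight w m}))
    (hdisj : Disjoint (I.restrictScalars K) (restrictSupport K O)) :
    IsCompl ((DFideal K n w I).restrictScalars K) (restrictSupport K O) where
  disjoint := by
    refine Submodule.disjoint_def.mpr fun q hq hqO => ?_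
    ext s
    have hcomp := eq_zero_of_mem_degreeFormSpace hI hdisj
      (weightedHomogeneousComponent_mem_degreeFormSpace hq (weight w s))
      (weightedHomogeneousComponent_mem_restrictSupport hqO _)
    simpa [coeff_weightedHomogeneousComponent] using congrArg (coeff s) hcomp
  codisjoint := by
    rw [codisjoint_iff, eq_top_iff, ← restrictSupport_univ K, restrictSupport_le_iff]
    intro m _
    obtain ⟨u, hu, v, hv, huv⟩ := Submodule.mem_sup.mp (hI m)
    have hu' : u ∈ restrictSupport K {t | weight w t ≤ weight w m} := by
      rw [eq_sub_of_add_eq huv]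
      exact sub_mem ((monomial_mem_restrictSupport K).mpr (Or.inl (le_refl (weight w m))))
        (restrictSupport_mono K Set.inter_subset_right hv)
    have hm := congrArg (weightedHomogeneousComponent w (weight w m)) huv
    rw [map_add, weightedHomogeneousComponent_eq_self
      (isWeightedHomogeneous_monomial w m 1 rfl)] at hm
    rw [← hm]
    exact Submodule.add_mem_sup (degreeFormSpace_le_DFideal _ ⟨u, ⟨hu, hu'⟩, rfl⟩)
      (weightedHomogeneousComponent_mem_restrictSupport
        (restrictSupport_mono K Set.inter_subset_left hv) _)

end Complement

section BorderDivision

lemma Finsupp.exists_add_single_le {σ : Type*} {t m : σ →₀ ℕ} (htm : t ≤ m) (hne : t ≠ m) :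
    ∃ i, t + single i 1 ≤ m := by
  obtain ⟨i, hi⟩ : ∃ i, t i < m i := by
    by_contra! h
    exact hne (le_antisymm htm fun i => h i)
  refine ⟨i, fun j => ?_⟩
  rcases eq_or_ne i j with rfl | hij
  · simpa using hi
  · simpa [Finsupp.single_apply, hij] using htm j

lemma add_single_mem_borderSet {n : ℕ} {O : Finset (Fin n →₀ ℕ)} {t : Fin n →₀ ℕ} (ht : t ∈ O)
    (i : Fin n) (hti : t + single i 1 ∉ O) : t + single i 1 ∈ borderSet n O := by
  simp only [borderSet, Finset.mem_sdiff, Finset.mem_biUnion, Finset.mem_image,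
    Finset.mem_univ, true_and]
  exact ⟨⟨t, ht, i, rfl⟩, hti⟩

variable {K : Type*} [Field K] {n : ℕ} {w : Fin n → ℕ} {O : Finset (Fin n →₀ ℕ)}
  {J : Ideal (MvPolynomial (Fin n) K)}

/-- Border division: walking from `t ∈ O` up to `m` one variable at a time, the first step out of
`O` lands on the border, and the border relation rewrites the monomial in terms of monomials closer
to `O`, all of degree at most `weight w m`. -/
lemma monomial_mem_sup_of_border
    (hB : ∀ b ∈ borderSet n O, monomial b (1 : K) ∈
      J.restrictScalars K ⊔ restrictSupport K (↑O ∩ {s | weight w s ≤ weight w b}))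
    {t m : Fin n →₀ ℕ} (ht : t ∈ O) (htm : t ≤ m) :
    monomial m (1 : K) ∈
      J.restrictScalars K ⊔ restrictSupport K (↑O ∩ {s | weight w s ≤ weight w m}) := by
  induction hk : degree (m - t) using Nat.strong_induction_on generalizing t m with
  | _ k ih =>
  by_cases hmO : m ∈ O
  · exact Submodule.mem_sup_right
      ((monomial_mem_restrictSupport K).mpr (Or.inl ⟨hmO, le_refl (weight w m)⟩))
  obtain ⟨i, hi⟩ := Finsupp.exists_add_single_le htm (ne_of_mem_of_not_mem ht hmO)
  set b := t + single i 1
  have hlt : degree (m - b) < k := by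
    rw [← hk, ← tsub_add_tsub_cancel hi (le_self_add : t ≤ b), add_tsub_cancel_left, map_add,
      degree_single]
    omega
  by_cases hbO : b ∈ O
  · exact ih _ hlt hbO hi rfl
  set a := m - b
  have hm : weight w m = weight w a + weight w b := by rw [← map_add, tsub_add_cancel_of_le hi]
  have hshift : restrictSupport K (↑O ∩ {s | weight w s ≤ weight w b}) ≤
      (J.restrictScalars K ⊔ restrictSupport K (↑O ∩ {s | weight w s ≤ weight w m})).comap
        (LinearMap.mulLeft K (monomial a (1 : K))) := by
    refine restrictSupport_le_iff.mpr fun s ⟨hsO, (hsb : weight w s ≤ weight w b)⟩ => ?_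
    have hs := ih _ (by rwa [add_tsub_cancel_right]) hsO le_add_self rfl
    rw [Submodule.mem_comap, LinearMap.mulLeft_apply, monomial_mul, mul_one]
    refine sup_le_sup_left (restrictSupport_mono K (Set.inter_subset_inter_right _ ?_)) _ hs
    intro r (hr : weight w r ≤ weight w (a + s))
    change weight w r ≤ weight w m
    rw [map_add] at hr
    omega
  obtain ⟨u, hu, v, hv, huv⟩ := Submodule.mem_sup.mp (hB b (add_single_mem_borderSet ht i hbO))
  have hab : monomial m (1 : K) = monomial a 1 * monomial b 1 := by
    rw [monomial_mul, mul_one, tsub_add_cancel_of_le hi]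
  rw [hab, ← huv, mul_add]
  exact add_mem (Submodule.mem_sup_left (J.mul_mem_left _ hu)) (hshift hv)

end BorderDivision

section BorderPolynomials

variable {K : Type*} [Field K] {n : ℕ} {w : Fin n → ℕ} {O : Finset (Fin n →₀ ℕ)}
  {b : Fin n →₀ ℕ} {g : MvPolynomial (Fin n) K}

lemma weightedTotalDegree_eq_of_mem_support_DF (hb : b ∈ (DF K n w g).support) :
    weightedTotalDegree w g = weight w b := by
  rw [DF_eq_weightedHomogeneousComponent] at hb
  exact (weightedHomogeneousComponent_isWeightedHomogeneous _ g
    (MvPolynomial.mem_support_iff.mp hb)).symm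

lemma ne_zero_of_mem_support_DF (hb : b ∈ (DF K n w g).support) : g ≠ 0 := by
  rintro rfl
  simp [DF] at hb

lemma monomial_sub_mem_restrictSupport {c : (Fin n →₀ ℕ) → K}
    (hg : g = monomial b 1 - ∑ t ∈ O, C (c t) * monomial t 1) (hb : b ∈ (DF K n w g).support) :
    monomial b 1 - g ∈ restrictSupport K (↑O ∩ {s | weight w s ≤ weight w b}) := by
  have hO : monomial b 1 - g ∈ restrictSupport K ↑O := by
    rw [hg, sub_sub_cancel]
    refine Submodule.sum_mem _ fun t ht => ?_
    rw [C_mul_monomial, mul_one]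
    exact (monomial_mem_restrictSupport K).mpr (Or.inl ht)
  refine (mem_restrictSupport_iff K).mpr (Set.subset_inter hO fun s hs => ?_)
  rcases Finset.mem_union.mp (support_sub _ _ _ hs) with hs | hs
  · rw [Finset.mem_singleton.mp (support_monomial_subset hs)]
    exact le_refl (weight w b)
  · exact (weightedTotalDegree_eq_of_mem_support_DF hb).le.trans' (le_weightedTotalDegree w hs)

lemma DF_eq_monomial_sub (hb : b ∈ (DF K n w g).support) :
    DF K n w g =
      monomial b 1 - weightedHomogeneousComponent w (weight w b) (monomial b 1 - g) := by
  rw [map_sub, weightedHomogeneousComponent_eq_self (isWeightedHomogeneous_monomial w b 1 rfl),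
    sub_sub_cancel, DF_eq_weightedHomogeneousComponent, weightedTotalDegree_eq_of_mem_support_DF hb]

end BorderPolynomials

theorem degreeForm_borderBasis_general (K : Type*) [Field K] (n : ℕ)
    (w : Fin n → ℕ)
    (O : Finset (Fin n →₀ ℕ)) (hO : ∀ t ∈ O, ∀ s : Fin n →₀ ℕ, s ≤ t → s ∈ O)
    (I : Ideal (MvPolynomial (Fin n) K))
    (g : (Fin n →₀ ℕ) → MvPolynomial (Fin n) K)
    (hg : IsBorderBasis K n O I g)
    (hsupp : ∀ b ∈ borderSet n O, b ∈ (DF K n w (g b)).support) :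
    IsBorderBasis K n O (DFideal K n w I) (fun b => DF K n w (g b)) := by
  rw [IsBorderBasis, span_monomial_eq_restrictSupport] at hg ⊢
  obtain ⟨hgI, hcompl⟩ := hg
  have hrem (b) (hb : b ∈ borderSet n O) :
      monomial b 1 - g b ∈ restrictSupport K (↑O ∩ {s | weight w s ≤ weight w b}) :=
    monomial_sub_mem_restrictSupport (hgI b hb).2.choose_spec (hsupp b hb)
  refine ⟨fun b hb => ⟨?_, ?_⟩, isCompl_DFideal (fun m => ?_) hcompl.disjoint⟩
  · exact Ideal.subset_span ⟨g b, (hgI b hb).1, ne_zero_of_mem_support_DF (hsupp b hb), rfl⟩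
  · set r := weightedHomogeneousComponent w (weight w b) (monomial b 1 - g b)
    have hr : r ∈ restrictSupport K ↑O := weightedHomogeneousComponent_mem_restrictSupport
      (restrictSupport_mono K Set.inter_subset_left (hrem b hb)) _
    exact ⟨fun t => coeff t r, by rw [sum_C_mul_monomial_of_mem_restrictSupport hr,
      DF_eq_monomial_sub (hsupp b hb)]⟩
  rcases O.eq_empty_or_nonempty with rfl | ⟨t, ht⟩
  · simp only [Finset.coe_empty, Set.empty_inter] at hcompl ⊢
    exact (codisjoint_iff.mp hcompl.codisjoint).symm ▸ Submodule.mem_top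
  refine monomial_mem_sup_of_border (fun b hb => ?_) (hO t ht 0 zero_le) zero_le
  exact Submodule.mem_sup.mpr ⟨g b, (hgI b hb).1, _, hrem b hb, add_sub_cancel _ _⟩

/-- If `I` has an `O`-border basis `G` with `b_j ∈ Supp(DF_W(g_j))` for all `j`, then the degree
form ideal `DF_W(I)` has the `O`-border basis `DF_W(G)`. -/
theorem degreeForm_borderBasis (K : Type*) [Field K] (n : ℕ)
    (w : Fin n → ℕ) (hw : ∀ i, 0 < w i)
    (O : Finset (Fin n →₀ ℕ)) (hO : ∀ t ∈ O, ∀ s : Fin n →₀ ℕ, s ≤ t → s ∈ O)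
    (I : Ideal (MvPolynomial (Fin n) K))
    (g : (Fin n →₀ ℕ) → MvPolynomial (Fin n) K)
    (hg : IsBorderBasis K n O I g)
    (hsupp : ∀ b ∈ borderSet n O, b ∈ (DF K n w (g b)).support) :
    IsBorderBasis K n O (DFideal K n w I) (fun b => DF K n w (g b)) :=
  degreeForm_borderBasis_general K n w O hO I g hg hsupp
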